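/- The class of connected graphs (finite and infinite) is not definable in BndSCL: there is no BndSCL sentence φ in the vocabulary of one binary relation E such that for every graph 𝔊, 𝔊 ⊨_ω φ if and only if 𝔊 is connected. In particular, letting 𝔊₁ = (ℤ, {(n,n+1) : n ∈ ℤ} ∪ {(n+1,n) : n ∈ ℤ}) and 𝔊₂ the disjoint union of two copies of 𝔊₁, the structures 𝔊₁ and 𝔊₂ are elementarily equivalent, 𝔊₁ is connected and 𝔊₂ is not, and every BndSCL sentence true in 𝔊₁ is true in 𝔊₂. -/

import Mathlib

/-
Common formalization of the logics SCL (static computation logic, unbounded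
game-theoretic semantics) and BndSCL (bounded semantics), following the paper
"First-order logic with self-reference".

* Games are played on arbitrary (possibly infinite) arenas; plays are maximal
  walks; strategies are functions from finite walks (histories) to positions;
  infinite plays, and finite plays ending at a dead end where `win` holds for
  neither player, are won by nobody.
* The semantic games are formalized with positions carrying the current
  (sub)formula, an environment binding each label symbol to the labelled
  formula it most recently named (this is the standard closure rendering of
  "reference formula of a claim-symbol occurrence"), the current assignment
  and the polarity (+ = true, − = false).  The bounded game additionally
  carries a clock value.
-/

set_option autoImplicit false

universe u

/-! ## Generic two-player games on (possibly infinite) arenas -/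

inductive Player : Type
  | eloise : Player
  | abelard : Player
deriving DecidableEq

def Player.opp : Player → Player
  | .eloise => .abelard
  | .abelard => .eloise

/-- A game arena: an ownership function (corresponding to the partition
`V = V₀ ∪ V₁`), an edge relation, and a predicate telling which player (if
any) wins a play ending at a given dead-end position. -/
structure GameArena (P : Type u) where
  turn : P → Player
  edge : P → P → Prop
  win : P → Player → Prop

namespace GameArena

variable {P : Type u} (A : GameArena P)

def DeadEnd (u : P) : Prop := ∀ x, ¬ A.edge u x

/-- `w` is a finite nonempty walk whose first element is `v`. -/
def IsWalkFrom (v : P) (w : List P) : Prop :=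
  w.head? = some v ∧ List.Chain' A.edge w

/-- A finite (maximal) play from `v`: a walk whose last element is a dead end. -/
def IsFinitePlay (v : P) (w : List P) : Prop :=
  A.IsWalkFrom v w ∧ ∀ u, w.getLast? = some u → A.DeadEnd u

/-- An infinite play from `v`. -/
def IsInfPlay (v : P) (f : ℕ → P) : Prop :=
  f 0 = v ∧ ∀ n, A.edge (f n) (f (n + 1))

/-- A strategy (a function from histories to positions) of player `pl` is
legal if it always prescribes a move along an edge whenever a move exists. -/
def LegalFor (pl : Player) (v : P) (σ : List P → P) : Prop :=
  ∀ w u, A.IsWalkFrom v w → w.getLast? = some u → A.turn u = pl →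
    (∃ x, A.edge u x) → A.edge u (σ w)

/-- The strategy `σ` of player `pl` is followed in the finite play `w`. -/
def FollowsFin (pl : Player) (σ : List P → P) (w : List P) : Prop :=
  ∀ q u x, (q ++ [x]) <+: w → q.getLast? = some u → A.turn u = pl → x = σ q

/-- The strategy `σ` of player `pl` is followed in the infinite play `f`. -/
def FollowsInf (pl : Player) (σ : List P → P) (f : ℕ → P) : Prop :=
  ∀ n, A.turn (f n) = pl →
    f (n + 1) = σ (List.ofFn fun i : Fin (n + 1) => f i)

/-- `σ` is a winning strategy of player `pl` from `v`: it is legal, every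
finite maximal play following it ends in a dead end won by `pl`, and no
infinite play follows it (infinite plays are won by neither player). -/
def WinningStrategy (pl : Player) (v : P) (σ : List P → P) : Prop :=
  A.LegalFor pl v σ ∧
  (∀ w, A.IsFinitePlay v w → A.FollowsFin pl σ w →
      ∃ u, w.getLast? = some u ∧ A.win u pl) ∧
  (∀ f, A.IsInfPlay v f → ¬ A.FollowsInf pl σ f)

def HasWinningStrategy (pl : Player) (v : P) : Prop :=
  ∃ σ : List P → P, A.WinningStrategy pl v σ

end GameArena

/-- A positional strategy: its moves depend only on the current position. -/
def Positional {P : Type u} (σ : List P → P) : Prop :=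
  ∀ q q' : List P, q.getLast? = q'.getLast? → σ q = σ q'

/-! ## Syntax of SCL / BndSCL -/

/-- A purely relational vocabulary. -/
structure Vocab : Type 1 where
  Rel : Type
  arity : Rel → ℕ

/-- Formulas of SCL / BndSCL over the vocabulary `V`.  Variables and label
symbols are natural numbers; `claim L` is the claim symbol `C_L` and
`lab L φ` is the labelled formula `L φ`. -/
inductive SCLFormula (V : Vocab) : Type
  | bot : SCLFormula V
  | eq (x y : ℕ) : SCLFormula V
  | rel (R : V.Rel) (args : Fin (V.arity R) → ℕ) : SCLFormula V
  | claim (L : ℕ) : SCLFormula V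
  | not (φ : SCLFormula V) : SCLFormula V
  | and (φ ψ : SCLFormula V) : SCLFormula V
  | or (φ ψ : SCLFormula V) : SCLFormula V
  | ex (x : ℕ) (φ : SCLFormula V) : SCLFormula V
  | all (x : ℕ) (φ : SCLFormula V) : SCLFormula V
  | lab (L : ℕ) (φ : SCLFormula V) : SCLFormula V

namespace SCLFormula

variable {V : Vocab}

/-- First-order atoms. -/
def IsFOAtom : SCLFormula V → Prop
  | .bot => True
  | .eq _ _ => True
  | .rel _ _ => True
  | _ => False

/-- Purely first-order formulas (no claim symbols, no label symbols). -/
def IsFO : SCLFormula V → Prop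
  | .bot => True
  | .eq _ _ => True
  | .rel _ _ => True
  | .claim _ => False
  | .not φ => IsFO φ
  | .and φ ψ => IsFO φ ∧ IsFO ψ
  | .or φ ψ => IsFO φ ∧ IsFO ψ
  | .ex _ φ => IsFO φ
  | .all _ φ => IsFO φ
  | .lab _ _ => False

/-- Free (individual) variables. -/
def freeVars : SCLFormula V → Finset ℕ
  | .bot => ∅
  | .eq x y => {x, y}
  | .rel _ a => Finset.image a Finset.univ
  | .claim _ => ∅
  | .not φ => freeVars φ
  | .and φ ψ => freeVars φ ∪ freeVars ψ
  | .or φ ψ => freeVars φ ∪ freeVars ψ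
  | .ex x φ => freeVars φ \ {x}
  | .all x φ => freeVars φ \ {x}
  | .lab _ φ => freeVars φ

/-- All variables occurring in a formula (free or bound). -/
def vars : SCLFormula V → Finset ℕ
  | .bot => ∅
  | .eq x y => {x, y}
  | .rel _ a => Finset.image a Finset.univ
  | .claim _ => ∅
  | .not φ => vars φ
  | .and φ ψ => vars φ ∪ vars ψ
  | .or φ ψ => vars φ ∪ vars ψ
  | .ex x φ => insert x (vars φ)
  | .all x φ => insert x (vars φ)
  | .lab _ φ => vars φ

/-- Sentences: formulas with no free variables. -/
def IsSentence (φ : SCLFormula V) : Prop := freeVars φ = ∅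

end SCLFormula

/-! ## Structures and first-order (Tarski) satisfaction -/

/-- A (suitable) model for vocabulary `V`: a nonempty domain together with an
interpretation of all relation symbols. -/
structure Struct (V : Vocab) where
  Dom : Type u
  dom_nonempty : Nonempty Dom
  interp : ∀ R : V.Rel, (Fin (V.arity R) → Dom) → Prop

attribute [instance] Struct.dom_nonempty

/-- Satisfaction of atoms (false on non-atoms). -/
def atomSat {V : Vocab} (M : Struct.{u} V) (s : ℕ → M.Dom) : SCLFormula V → Prop
  | .bot => False
  | .eq x y => s x = s y
  | .rel R a => M.interp R fun i => s (a i)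
  | _ => False

/-- Standard (Tarski) first-order satisfaction.  It is only meaningful on
purely first-order formulas; claim symbols are interpreted as `False` and
label symbols are ignored. -/
def FOSat {V : Vocab} (M : Struct.{u} V) : (ℕ → M.Dom) → SCLFormula V → Prop
  | _, .bot => False
  | s, .eq x y => s x = s y
  | s, .rel R a => M.interp R fun i => s (a i)
  | _, .claim _ => False
  | s, .not φ => ¬ FOSat M s φ
  | s, .and φ ψ => FOSat M s φ ∧ FOSat M s ψ
  | s, .or φ ψ => FOSat M s φ ∨ FOSat M s ψ
  | s, .ex x φ => ∃ a : M.Dom, FOSat M (Function.update s x a) φ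
  | s, .all x φ => ∀ a : M.Dom, FOSat M (Function.update s x a) φ
  | s, .lab _ φ => FOSat M s φ

/-! ## The evaluation games -/

/-- A position of the semantic game: the current formula, the environment
recording for each label symbol `L` the reference formula `L ψ` it currently
names, the current assignment, and the polarity (`true` = `+`). -/
structure SCLPos (V : Vocab) (D : Type u) : Type u where
  form : SCLFormula V
  env : ℕ → Option (SCLFormula V)
  asg : ℕ → D
  pol : Bool

/-- Which player moves at a given position. (At positions with at most one
successor the owner is irrelevant; we let Eloise own them.) -/
def posTurn {V : Vocab} {D : Type u} (p : SCLPos V D) : Player :=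
  match p.form, p.pol with
  | .and _ _, true => .abelard
  | .and _ _, false => .eloise
  | .or _ _, true => .eloise
  | .or _ _, false => .abelard
  | .all _ _, true => .abelard
  | .all _ _, false => .eloise
  | .ex _ _, true => .eloise
  | .ex _ _, false => .abelard
  | _, _ => .eloise

/-- Who wins a play ending at a given position: at an FO-atom position,
Eloise wins iff the atom's truth value agrees with the polarity, and Abelard
wins otherwise; plays ending anywhere else (e.g. at a claim symbol with no
reference formula, or with clock value 0) are won by neither player. -/
def posWin {V : Vocab} (M : Struct.{u} V) (p : SCLPos V M.Dom) : Player → Prop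
  | .eloise => p.form.IsFOAtom ∧ (atomSat M p.asg p.form ↔ p.pol = true)
  | .abelard => p.form.IsFOAtom ∧ ¬ (atomSat M p.asg p.form ↔ p.pol = true)

/-- Moves of the unbounded evaluation game `G_∞`. -/
inductive UStep {V : Vocab} (M : Struct.{u} V) :
    SCLPos V M.Dom → SCLPos V M.Dom → Prop
  | neg (φ : SCLFormula V) (e : ℕ → Option (SCLFormula V)) (s : ℕ → M.Dom) (b : Bool) :
      UStep M ⟨.not φ, e, s, b⟩ ⟨φ, e, s, !b⟩
  | andLeft (φ ψ : SCLFormula V) (e : ℕ → Option (SCLFormula V)) (s : ℕ → M.Dom) (b : Bool) :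
      UStep M ⟨.and φ ψ, e, s, b⟩ ⟨φ, e, s, b⟩
  | andRight (φ ψ : SCLFormula V) (e : ℕ → Option (SCLFormula V)) (s : ℕ → M.Dom) (b : Bool) :
      UStep M ⟨.and φ ψ, e, s, b⟩ ⟨ψ, e, s, b⟩
  | orLeft (φ ψ : SCLFormula V) (e : ℕ → Option (SCLFormula V)) (s : ℕ → M.Dom) (b : Bool) :
      UStep M ⟨.or φ ψ, e, s, b⟩ ⟨φ, e, s, b⟩
  | orRight (φ ψ : SCLFormula V) (e : ℕ → Option (SCLFormula V)) (s : ℕ → M.Dom) (b : Bool) :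
      UStep M ⟨.or φ ψ, e, s, b⟩ ⟨ψ, e, s, b⟩
  | exStep (x : ℕ) (φ : SCLFormula V) (e : ℕ → Option (SCLFormula V)) (s : ℕ → M.Dom)
      (b : Bool) (a : M.Dom) :
      UStep M ⟨.ex x φ, e, s, b⟩ ⟨φ, e, Function.update s x a, b⟩
  | allStep (x : ℕ) (φ : SCLFormula V) (e : ℕ → Option (SCLFormula V)) (s : ℕ → M.Dom)
      (b : Bool) (a : M.Dom) :
      UStep M ⟨.all x φ, e, s, b⟩ ⟨φ, e, Function.update s x a, b⟩
  | labStep (L : ℕ) (φ : SCLFormula V) (e : ℕ → Option (SCLFormula V)) (s : ℕ → M.Dom)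
      (b : Bool) :
      UStep M ⟨.lab L φ, e, s, b⟩ ⟨φ, Function.update e L (some (.lab L φ)), s, b⟩
  | claimStep (L : ℕ) (e : ℕ → Option (SCLFormula V)) (s : ℕ → M.Dom) (b : Bool)
      (χ : SCLFormula V) (h : e L = some χ) :
      UStep M ⟨.claim L, e, s, b⟩ ⟨χ, e, s, b⟩

/-- Moves of the `n`-bounded evaluation game: positions additionally carry a
clock value, which decreases by one exactly at jumps from a claim symbol to
its reference formula; a claim-symbol position with clock value `0` is a dead
end won by neither player. -/
inductive BStep {V : Vocab} (M : Struct.{u} V) :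
    SCLPos V M.Dom × ℕ → SCLPos V M.Dom × ℕ → Prop
  | neg (φ : SCLFormula V) (e : ℕ → Option (SCLFormula V)) (s : ℕ → M.Dom) (b : Bool) (n : ℕ) :
      BStep M (⟨.not φ, e, s, b⟩, n) (⟨φ, e, s, !b⟩, n)
  | andLeft (φ ψ : SCLFormula V) (e : ℕ → Option (SCLFormula V)) (s : ℕ → M.Dom) (b : Bool)
      (n : ℕ) : BStep M (⟨.and φ ψ, e, s, b⟩, n) (⟨φ, e, s, b⟩, n)
  | andRight (φ ψ : SCLFormula V) (e : ℕ → Option (SCLFormula V)) (s : ℕ → M.Dom) (b : Bool)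
      (n : ℕ) : BStep M (⟨.and φ ψ, e, s, b⟩, n) (⟨ψ, e, s, b⟩, n)
  | orLeft (φ ψ : SCLFormula V) (e : ℕ → Option (SCLFormula V)) (s : ℕ → M.Dom) (b : Bool)
      (n : ℕ) : BStep M (⟨.or φ ψ, e, s, b⟩, n) (⟨φ, e, s, b⟩, n)
  | orRight (φ ψ : SCLFormula V) (e : ℕ → Option (SCLFormula V)) (s : ℕ → M.Dom) (b : Bool)
      (n : ℕ) : BStep M (⟨.or φ ψ, e, s, b⟩, n) (⟨ψ, e, s, b⟩, n)
  | exStep (x : ℕ) (φ : SCLFormula V) (e : ℕ → Option (SCLFormula V)) (s : ℕ → M.Dom)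
      (b : Bool) (n : ℕ) (a : M.Dom) :
      BStep M (⟨.ex x φ, e, s, b⟩, n) (⟨φ, e, Function.update s x a, b⟩, n)
  | allStep (x : ℕ) (φ : SCLFormula V) (e : ℕ → Option (SCLFormula V)) (s : ℕ → M.Dom)
      (b : Bool) (n : ℕ) (a : M.Dom) :
      BStep M (⟨.all x φ, e, s, b⟩, n) (⟨φ, e, Function.update s x a, b⟩, n)
  | labStep (L : ℕ) (φ : SCLFormula V) (e : ℕ → Option (SCLFormula V)) (s : ℕ → M.Dom)
      (b : Bool) (n : ℕ) :
      BStep M (⟨.lab L φ, e, s, b⟩, n) (⟨φ, Function.update e L (some (.lab L φ)), s, b⟩, n)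
  | claimStep (L : ℕ) (e : ℕ → Option (SCLFormula V)) (s : ℕ → M.Dom) (b : Bool)
      (χ : SCLFormula V) (n : ℕ) (h : e L = some χ) :
      BStep M (⟨.claim L, e, s, b⟩, n + 1) (⟨χ, e, s, b⟩, n)

/-- The unbounded evaluation game `G_∞(𝔄, ·, ·)` as a game arena. -/
def gameU {V : Vocab} (M : Struct.{u} V) : GameArena (SCLPos V M.Dom) where
  turn := posTurn
  edge := UStep M
  win := posWin M

/-- The bounded evaluation games `G_n(𝔄, ·, ·)` (for all clock values `n`
simultaneously) as a game arena. -/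
def gameB {V : Vocab} (M : Struct.{u} V) : GameArena (SCLPos V M.Dom × ℕ) where
  turn p := posTurn p.1
  edge := BStep M
  win p := posWin M p.1

/-- The initial position of the evaluation game for `φ` under assignment `s`:
empty environment and positive polarity. -/
def initPos {V : Vocab} {D : Type u} (φ : SCLFormula V) (s : ℕ → D) : SCLPos V D :=
  ⟨φ, fun _ => none, s, true⟩

/-- Truth under the unbounded semantics (the logic SCL):
`𝔄,s ⊨ φ` iff Eloise has a winning strategy in `G_∞(𝔄,s,φ)`. -/
def SCLTrue {V : Vocab} (M : Struct.{u} V) (s : ℕ → M.Dom) (φ : SCLFormula V) : Prop :=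
  (gameU M).HasWinningStrategy .eloise (initPos φ s)

/-! ### The bounded game `G_ω` -/

/-- Positions of the game `G_ω`: the initial position (where Abelard picks a
number `n'`), the intermediate positions (where Eloise picks some `n ≥ n'`),
and the positions of the `n`-bounded games. -/
inductive GOPos (V : Vocab) (D : Type u) : Type u
  | start : GOPos V D
  | mid (n' : ℕ) : GOPos V D
  | inner (p : SCLPos V D) (clock : ℕ) : GOPos V D

inductive GOStep {V : Vocab} (M : Struct.{u} V) (φ : SCLFormula V) (s : ℕ → M.Dom) :
    GOPos V M.Dom → GOPos V M.Dom → Prop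
  | abelardPick (n' : ℕ) : GOStep M φ s .start (.mid n')
  | eloisePick (n' n : ℕ) (h : n' ≤ n) : GOStep M φ s (.mid n') (.inner (initPos φ s) n)
  | play (p q : SCLPos V M.Dom) (m k : ℕ) (h : BStep M (p, m) (q, k)) :
      GOStep M φ s (.inner p m) (.inner q k)

def goTurn {V : Vocab} {D : Type u} : GOPos V D → Player
  | .start => .abelard
  | .mid _ => .eloise
  | .inner p _ => posTurn p

def goWin {V : Vocab} (M : Struct.{u} V) : GOPos V M.Dom → Player → Prop
  | .inner p _, pl => posWin M p pl
  | _, _ => False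

/-- The bounded evaluation game `G_ω(𝔄,s,φ)`: Abelard picks `n' ∈ ℕ`, then
Eloise picks `n ≥ n'`, and then `G_n(𝔄,s,φ)` is played. -/
def gameOmega {V : Vocab} (M : Struct.{u} V) (φ : SCLFormula V) (s : ℕ → M.Dom) :
    GameArena (GOPos V M.Dom) where
  turn := goTurn
  edge := GOStep M φ s
  win := goWin M

/-- Truth under the bounded semantics (the logic BndSCL):
`𝔄,s ⊨_ω φ` iff Eloise has a winning strategy in `G_ω(𝔄,s,φ)`. -/
def BndTrue {V : Vocab} (M : Struct.{u} V) (s : ℕ → M.Dom) (φ : SCLFormula V) : Prop :=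
  (gameOmega M φ s).HasWinningStrategy .eloise .start

/-! ## Approximants -/

/-- Auxiliary structural recursion for approximants: `k` tells what to put in
place of a claim symbol.  Label symbols are deleted (while updating the
environment), and polarity is tracked through negations. -/
def approxCore {V : Vocab}
    (k : (ℕ → Option (SCLFormula V)) → Bool → ℕ → SCLFormula V) :
    (ℕ → Option (SCLFormula V)) → Bool → SCLFormula V → SCLFormula V
  | _, _, .bot => .bot
  | _, _, .eq x y => .eq x y
  | _, _, .rel R a => .rel R a
  | e, b, .claim L => k e b L
  | e, b, .not φ => .not (approxCore k e (!b) φ)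
  | e, b, .and φ ψ => .and (approxCore k e b φ) (approxCore k e b ψ)
  | e, b, .or φ ψ => .or (approxCore k e b φ) (approxCore k e b ψ)
  | e, b, .ex x φ => .ex x (approxCore k e b φ)
  | e, b, .all x φ => .all x (approxCore k e b φ)
  | e, b, .lab L φ => approxCore k (Function.update e L (some (.lab L φ))) b φ

/-- `approx n e b φ` unfolds each claim symbol of `φ` (in environment `e`,
under polarity `b`) through `n` jumps to reference formulas; claim symbols
reached with exhausted budget (or with no reference formula) are replaced by
`⊥` at positive occurrences and `⊤` (i.e. `¬⊥`) at negative occurrences, and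
all label symbols are deleted. -/
def approx {V : Vocab} : ℕ → (ℕ → Option (SCLFormula V)) → Bool → SCLFormula V → SCLFormula V
  | 0 => approxCore fun _ b _ => if b then .bot else .not .bot
  | n + 1 => approxCore fun e b L =>
      match e L with
      | some χ => approx n e b χ
      | none => if b then .bot else .not .bot

/-- The `n`-th approximant `Φⁿ_φ` of `φ`: the first-order formula obtained
from the `n`-th unfolding of `φ` by deleting all label symbols and replacing
positive claim occurrences by `⊥` and negative ones by `⊤`. -/
def approximant {V : Vocab} (φ : SCLFormula V) (n : ℕ) : SCLFormula V :=
  approx n (fun _ => none) true φ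

/-! ## Directed graphs as structures over one binary relation symbol -/

/-- The vocabulary with a single binary relation symbol. -/
abbrev binVocab : Vocab := ⟨Unit, fun _ => 2⟩

/-- The edge relation of a `binVocab`-structure. -/
def Edge (M : Struct.{u} binVocab) (a b : M.Dom) : Prop :=
  M.interp Unit.unit (fun i => if i.val = 0 then a else b)

/-- The atomic formula `E x y` (for variables `x`, `y`). -/
def Eform (x y : ℕ) : SCLFormula binVocab :=
  .rel Unit.unit (fun i => if i.val = 0 then x else y)

/-- `M` is a graph: the edge relation is symmetric. -/
def IsGraph (M : Struct.{u} binVocab) : Prop :=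
  ∀ a b : M.Dom, Edge M a b → Edge M b a

/-- `M` is connected: any two distinct vertices are joined by a finite path. -/
def GraphConnected (M : Struct.{u} binVocab) : Prop :=
  ∀ u v : M.Dom, u ≠ v →
    ∃ (n : ℕ) (f : ℕ → M.Dom), f 0 = u ∧ f n = v ∧
      ∀ i, i < n → Edge M (f i) (f (i + 1))

/-- Two nodes of `ℤ` are adjacent if they differ by one. -/
def adjZ (a b : ℤ) : Prop := b = a + 1 ∨ a = b + 1

/-- The graph `𝔊₁ = (ℤ, {(n,n+1)} ∪ {(n+1,n)})`. -/
def G1 : Struct.{u} binVocab where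
  Dom := ULift.{u} ℤ
  dom_nonempty := ⟨⟨0⟩⟩
  interp := fun _ t =>
    adjZ (t ⟨0, Nat.zero_lt_two⟩).down (t ⟨1, Nat.one_lt_two⟩).down

/-- The graph `𝔊₂`: the disjoint union of two copies of `𝔊₁`. -/
def G2 : Struct.{u} binVocab where
  Dom := ULift.{u} ℤ × Bool
  dom_nonempty := ⟨(⟨0⟩, false)⟩
  interp := fun _ t =>
    (t ⟨0, Nat.zero_lt_two⟩).2 = (t ⟨1, Nat.one_lt_two⟩).2 ∧
      adjZ (t ⟨0, Nat.zero_lt_two⟩).1.down (t ⟨1, Nat.one_lt_two⟩).1.down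


/-!
Eloise wins the bounded game `G_n` from a position exactly when the `n`-th unfolding of its
formula, read in the position's polarity, is true: the bounded games are well-founded, and this
truth condition satisfies the one-step equations of backward induction. The unfoldings increase
with `n`, so nothing is lost when Eloise answers Abelard's `n'` in `G_ω` by a large clock; hence
`𝔄 ⊨_ω φ` iff some approximant of `φ` holds in `𝔄`, and the approximants of a sentence are
first-order sentences. Both 𝔊₁ and 𝔊₂ are disjoint unions of ℤ-lines, and in the
Ehrenfeucht–Fraïssé game with `k` rounds left Duplicator keeps all distances up to `3 ^ k` equal,
so 𝔊₁ and 𝔊₂ satisfy the same first-order sentences, and therefore the same BndSCL sentences.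
Since 𝔊₁ is connected and 𝔊₂ is not, no BndSCL sentence defines connectivity.
-/

universe v

namespace GameArena

variable {P : Type u} (A : GameArena P) (pl : Player)

open Classical in
def Unfold (W : P → Prop) (u : P) : Prop :=
  if A.DeadEnd u then A.win u pl
  else if A.turn u = pl then ∃ x, A.edge u x ∧ W x
  else ∀ x, A.edge u x → W x

def Conforms (σ : List P → P) (v : P) (w : List P) : Prop :=
  A.IsWalkFrom v w ∧ A.FollowsFin pl σ w

variable {A pl}

theorem unfold_of_deadEnd {W : P → Prop} {u : P} (h : A.DeadEnd u) :
    A.Unfold pl W u ↔ A.win u pl := by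
  simp only [Unfold, if_pos h]

theorem unfold_of_not_deadEnd {W : P → Prop} {u : P} (h : ¬ A.DeadEnd u) :
    A.Unfold pl W u ↔
      if A.turn u = pl then ∃ x, A.edge u x ∧ W x else ∀ x, A.edge u x → W x := by
  simp only [Unfold, if_neg h]

theorem unfold_of_edge_iff {ι : Sort*} [Nonempty ι] {W : P → Prop} {u : P} (f : ι → P)
    (h : ∀ x, A.edge u x ↔ ∃ i, f i = x) :
    A.Unfold pl W u ↔ if A.turn u = pl then ∃ i, W (f i) else ∀ i, W (f i) := by
  have hlive : ¬ A.DeadEnd u := fun hd => hd _ ((h _).2 ⟨Classical.arbitrary ι, rfl⟩)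
  simp only [unfold_of_not_deadEnd hlive, h]
  split_ifs <;> simp

theorem unfold_of_edge_iff_eq {W : P → Prop} {u x₀ : P} (h : ∀ x, A.edge u x ↔ x₀ = x) :
    A.Unfold pl W u ↔ W x₀ := by
  rw [unfold_of_edge_iff (fun _ : Unit => x₀) (by simpa using h)]
  split_ifs <;> simp

theorem unfold_comap {Q : Type v} {B : GameArena Q} (g : Q → P) {W : P → Prop} {q : Q}
    (hturn : A.turn (g q) = B.turn q) (hwin : A.win (g q) pl ↔ B.win q pl)
    (hedge : ∀ x, A.edge (g q) x ↔ ∃ y, B.edge q y ∧ g y = x) :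
    A.Unfold pl W (g q) ↔ B.Unfold pl (W ∘ g) q := by
  have hdead : A.DeadEnd (g q) ↔ B.DeadEnd q := by simp [DeadEnd, hedge]
  by_cases hd : B.DeadEnd q
  · rw [unfold_of_deadEnd hd, unfold_of_deadEnd (hdead.mpr hd), hwin]
  · rw [unfold_of_not_deadEnd hd, unfold_of_not_deadEnd (mt hdead.mp hd), hturn]
    simp [hedge]

theorem followsFin_snoc_iff {σ : List P → P} {w : List P} {u x : P}
    (hu : w.getLast? = some u) :
    A.FollowsFin pl σ (w ++ [x]) ↔ A.FollowsFin pl σ w ∧ (A.turn u = pl → x = σ w) := by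
  refine ⟨fun h => ⟨fun q u' x' hq => h q u' x' (hq.trans (List.prefix_append _ _)),
    h w u x List.prefix_rfl hu⟩, ?_⟩
  rintro ⟨h, hx⟩ q u' x' hq hq' ht
  rcases List.prefix_concat_iff.mp hq with hq | hq
  · obtain ⟨rfl, hx'⟩ := List.append_inj' hq rfl
    obtain rfl : x' = x := by simpa using hx'
    obtain rfl : u' = u := Option.some.inj (hq'.symm.trans hu)
    exact hx ht
  · exact h q u' x' hq hq' ht

theorem conforms_singleton_iff {σ : List P → P} {v x : P} :
    A.Conforms pl σ v [x] ↔ x = v := by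
  refine ⟨fun h => by simpa [IsWalkFrom] using h.1.1, ?_⟩
  rintro rfl
  refine ⟨⟨rfl, List.isChain_singleton _⟩, fun q u x hq => ?_⟩
  have := hq.length_le
  simp only [List.length_append, List.length_singleton] at this
  rw [List.length_eq_zero_iff.mp (by omega : q.length = 0)]
  simp

theorem conforms_snoc_iff {σ : List P → P} {v u x : P} {w : List P}
    (hu : w.getLast? = some u) :
    A.Conforms pl σ v (w ++ [x]) ↔
      A.Conforms pl σ v w ∧ A.edge u x ∧ (A.turn u = pl → x = σ w) := by
  have hne : w ≠ [] := by rintro rfl; simp at hu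
  have hchain : List.IsChain A.edge (w ++ [x]) ↔ List.IsChain A.edge w ∧ A.edge u x := by
    simp [List.isChain_append, hu]
  rw [Conforms, Conforms, IsWalkFrom, IsWalkFrom, List.head?_append_of_ne_nil _ hne,
    followsFin_snoc_iff hu]
  exact ⟨fun ⟨⟨hv, hc⟩, hf, hx⟩ => ⟨⟨⟨hv, (hchain.mp hc).1⟩, hf⟩, (hchain.mp hc).2, hx⟩,
    fun ⟨⟨⟨hv, hc⟩, hf⟩, he, hx⟩ => ⟨⟨hv, hchain.mpr ⟨hc, he⟩⟩, hf, hx⟩⟩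

-- The fallback to an arbitrary move matters: `LegalFor` also constrains moves outside `W`.
open Classical in
noncomputable def moveInto (A : GameArena P) (W : P → Prop) (u : P) : P :=
  if h : ∃ x, A.edge u x ∧ W x then h.choose
  else if h' : ∃ x, A.edge u x then h'.choose else u

theorem moveInto_spec {W : P → Prop} {u : P} (h : ∃ x, A.edge u x ∧ W x) :
    A.edge u (A.moveInto W u) ∧ W (A.moveInto W u) := by
  rw [moveInto, dif_pos h]
  exact h.choose_spec

theorem edge_moveInto {W : P → Prop} {u : P} (h : ∃ x, A.edge u x) :
    A.edge u (A.moveInto W u) := by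
  rw [moveInto]
  split_ifs with h₁
  exacts [h₁.choose_spec.1, h.choose_spec]

noncomputable def stayIn (A : GameArena P) (W : P → Prop) (v : P) (w : List P) : P :=
  A.moveInto W (w.getLast?.getD v)

theorem stayIn_of_getLast? {W : P → Prop} {v u : P} {w : List P} (hu : w.getLast? = some u) :
    A.stayIn W v w = A.moveInto W u := by
  rw [stayIn, hu, Option.getD_some]

theorem not_isInfPlay (hwf : WellFounded fun x y => A.edge y x) (v : P) (f : ℕ → P) :
    ¬ A.IsInfPlay v f := fun hf =>
  have : IsWellFounded P fun x y => A.edge y x := ⟨hwf⟩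
  (WellFounded.not_rel_apply_succ (r := fun x y => A.edge y x) f).elim fun n hn => hn (hf.2 n)

theorem mem_of_conforms_stayIn {W : P → Prop} (hW : ∀ u, W u → A.Unfold pl W u) {v : P}
    (hv : W v) {w : List P} (hw : A.Conforms pl (A.stayIn W v) v w) {u : P}
    (hu : w.getLast? = some u) : W u := by
  induction w using List.reverseRecOn generalizing u with
  | nil => simp at hu
  | append_singleton w x ih =>
    obtain rfl : x = u := by simpa using hu
    cases hlast : w.getLast? with
    | none =>
      rw [List.getLast?_eq_none_iff.mp hlast] at hw
      rwa [conforms_singleton_iff.mp hw]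
    | some u' =>
      obtain ⟨hw', he, hx⟩ := (conforms_snoc_iff hlast).mp hw
      have hWu' := hW u' (ih hw' hlast)
      rw [unfold_of_not_deadEnd fun hd => hd x he] at hWu'
      split_ifs at hWu' with ht
      · rw [hx ht, stayIn_of_getLast? hlast]
        exact (moveInto_spec hWu').2
      · exact hWu' x he

theorem winningStrategy_stayIn (hwf : WellFounded fun x y => A.edge y x) {W : P → Prop}
    (hW : ∀ u, W u → A.Unfold pl W u) {v : P} (hv : W v) :
    A.WinningStrategy pl v (A.stayIn W v) := by
  refine ⟨fun w u _ hu _ h => stayIn_of_getLast? hu ▸ edge_moveInto h, fun w hw hf => ?_,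
    fun f hf _ => not_isInfPlay hwf v f hf⟩
  obtain ⟨u, hu⟩ : ∃ u, w.getLast? = some u := Option.isSome_iff_exists.mp
    (List.getLast?_isSome.mpr (by rintro rfl; simp [IsFinitePlay, IsWalkFrom] at hw))
  exact ⟨u, hu, (unfold_of_deadEnd (hw.2 u hu)).mp
    (hW u (mem_of_conforms_stayIn hW hv ⟨hw.1, hf⟩ hu))⟩

theorem WinningStrategy.mem_of_conforms (hwf : WellFounded fun x y => A.edge y x)
    {W : P → Prop} (hW : ∀ u, A.Unfold pl W u → W u) {v : P} {σ : List P → P}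
    (hσ : A.WinningStrategy pl v σ) {w : List P} (hw : A.Conforms pl σ v w) {u : P}
    (hu : w.getLast? = some u) : W u := by
  induction u using hwf.induction generalizing w with
  | _ u ih =>
  apply hW
  by_cases hd : A.DeadEnd u
  · obtain ⟨u', hu', hwin⟩ := hσ.2.1 w
      ⟨hw.1, fun u' hu' => Option.some.inj (hu.symm.trans hu') ▸ hd⟩ hw.2
    obtain rfl : u' = u := Option.some.inj (hu'.symm.trans hu)
    exact (unfold_of_deadEnd hd).mpr hwin
  rw [unfold_of_not_deadEnd hd]
  split_ifs with ht
  · have he := hσ.1 w u hw.1 hu ht (by simpa [DeadEnd] using hd)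
    exact ⟨_, he, ih _ he ((conforms_snoc_iff hu).mpr ⟨hw, he, fun _ => rfl⟩) (by simp)⟩
  · exact fun x he =>
      ih x he ((conforms_snoc_iff hu).mpr ⟨hw, he, fun h => absurd h ht⟩) (by simp)

theorem hasWinningStrategy_iff (hwf : WellFounded fun x y => A.edge y x) {W : P → Prop}
    (hW : ∀ u, W u ↔ A.Unfold pl W u) (v : P) : A.HasWinningStrategy pl v ↔ W v :=
  ⟨fun ⟨_, hσ⟩ => hσ.mem_of_conforms hwf (fun u => (hW u).mpr)
      (conforms_singleton_iff.mpr rfl) rfl,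
    fun hv => ⟨_, winningStrategy_stayIn hwf (fun u => (hW u).mp) hv⟩⟩

end GameArena

section Approximants

variable {V : Vocab}

def claimApprox : ℕ → (ℕ → Option (SCLFormula V)) → Bool → ℕ → SCLFormula V
  | 0 => fun _ b _ => if b then .bot else .not .bot
  | n + 1 => fun e b L => (e L).elim (if b then .bot else .not .bot) (approx n e b)

theorem approx_eq_approxCore (n : ℕ) : approx n = approxCore (claimApprox (V := V) n) := by
  cases n with
  | zero => rfl
  | succ n =>
    rw [approx]
    congr
    funext e b L
    show _ = (e L).elim _ _
    cases e L <;> rfl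

variable (M : Struct.{u} V)

def EntailsAt (b : Bool) (χ χ' : SCLFormula V) : Prop :=
  ∀ s, cond b (FOSat M s χ → FOSat M s χ') (FOSat M s χ' → FOSat M s χ)

theorem entailsAt_refl (b : Bool) (χ : SCLFormula V) : EntailsAt M b χ χ := by
  intro s; cases b <;> exact id

def ApproxHolds (p : SCLPos V M.Dom) (n : ℕ) : Prop :=
  FOSat M p.asg (approx n p.env p.pol p.form) ↔ p.pol = true

variable {M}

theorem approxCore_entailsAt {k k' : (ℕ → Option (SCLFormula V)) → Bool → ℕ → SCLFormula V}
    (hk : ∀ e b L, EntailsAt M b (k e b L) (k' e b L)) (ψ : SCLFormula V) :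
    ∀ e b, EntailsAt M b (approxCore k e b ψ) (approxCore k' e b ψ) := by
  induction ψ with
  | bot | eq | rel => exact fun _ b => entailsAt_refl M b _
  | claim L => exact (hk · · L)
  | not φ ih => intro e b s; have h := ih e (!b) s; cases b <;> exact mt h
  | and φ ψ ih₁ ih₂ | or φ ψ ih₁ ih₂ =>
    intro e b s; have h₁ := ih₁ e b s; have h₂ := ih₂ e b s
    cases b <;> exact fun h => h.imp h₁ h₂
  | ex x φ ih =>
    intro e b s; have h := (ih e b <| Function.update s x ·)
    cases b <;> exact fun ⟨a, ha⟩ => ⟨a, h a ha⟩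
  | all x φ ih =>
    intro e b s; have h := (ih e b <| Function.update s x ·)
    cases b <;> exact fun ha a => h a (ha a)
  | lab L φ ih => exact fun e => ih _

theorem approx_entailsAt {n n' : ℕ} (h : n ≤ n') (ψ : SCLFormula V)
    (e : ℕ → Option (SCLFormula V)) (b : Bool) :
    EntailsAt M b (approx n e b ψ) (approx n' e b ψ) := by
  induction n generalizing n' ψ e b with
  | zero =>
    rw [approx_eq_approxCore, approx_eq_approxCore]
    refine approxCore_entailsAt (fun e b L s => ?_) ψ e b
    cases b
    exacts [fun _ h => h, False.elim]
  | succ n ih =>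
    obtain ⟨n', rfl⟩ : ∃ k, n' = k + 1 := ⟨n' - 1, by omega⟩
    rw [approx_eq_approxCore, approx_eq_approxCore]
    refine approxCore_entailsAt (fun e b L => ?_) ψ e b
    show EntailsAt M b ((e L).elim _ _) ((e L).elim _ _)
    cases e L with
    | none => exact entailsAt_refl M b _
    | some χ => exact ih (by omega) χ e b

theorem ApproxHolds.mono {p : SCLPos V M.Dom} {n n' : ℕ} (h : ApproxHolds M p n)
    (hn : n ≤ n') : ApproxHolds M p n' := by
  obtain ⟨ψ, e, s, b⟩ := p
  have := approx_entailsAt (M := M) hn ψ e b s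
  cases b <;> simp_all [ApproxHolds]

open GameArena in
theorem approxHolds_iff_unfold (q : SCLPos V M.Dom × ℕ) :
    ApproxHolds M q.1 q.2 ↔ (gameB M).Unfold .eloise (fun q => ApproxHolds M q.1 q.2) q := by
  obtain ⟨⟨ψ, e, s, b⟩, m⟩ := q
  cases ψ with
  | bot | eq | rel =>
    rw [unfold_of_deadEnd fun _ h => by cases h]
    simp [ApproxHolds, approx_eq_approxCore, approxCore, FOSat, gameB, posWin, atomSat,
      SCLFormula.IsFOAtom]
  | claim L =>
    cases hL : e L with
    | none =>
      rw [unfold_of_deadEnd fun _ h => by cases h; simp_all]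
      cases m <;> cases b <;>
        simp [ApproxHolds, approx, approxCore, FOSat, gameB, posWin, SCLFormula.IsFOAtom, hL]
    | some χ =>
      cases m with
      | zero =>
        rw [unfold_of_deadEnd fun _ h => by cases h]
        cases b <;>
          simp [ApproxHolds, approx, approxCore, FOSat, gameB, posWin, SCLFormula.IsFOAtom]
      | succ k =>
        rw [unfold_of_edge_iff_eq (x₀ := (⟨χ, e, s, b⟩, k))
          fun x => ⟨by rintro ⟨⟩; simp_all, by rintro rfl; exact .claimStep L e s b χ k hL⟩]
        simp only [ApproxHolds, approx_eq_approxCore (k + 1), approxCore, claimApprox, hL,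
          Option.elim]
  | not φ =>
    rw [unfold_of_edge_iff_eq (x₀ := (⟨φ, e, s, !b⟩, m))
      fun x => ⟨by rintro ⟨⟩; rfl, by rintro rfl; constructor⟩]
    cases b <;> simp [ApproxHolds, approx_eq_approxCore, approxCore, FOSat]
  | lab L φ =>
    rw [unfold_of_edge_iff_eq (x₀ := (⟨φ, Function.update e L (some (.lab L φ)), s, b⟩, m))
      fun x => ⟨by rintro ⟨⟩; rfl, by rintro rfl; constructor⟩]
    simp [ApproxHolds, approx_eq_approxCore, approxCore]
  | and φ ψ =>
    rw [unfold_of_edge_iff (fun i : Bool => (⟨cond i ψ φ, e, s, b⟩, m)) fun x =>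
      ⟨by rintro ⟨⟩; exacts [⟨false, rfl⟩, ⟨true, rfl⟩], by rintro ⟨_ | _, rfl⟩ <;> constructor⟩]
    cases b <;> simp [ApproxHolds, approx_eq_approxCore, approxCore, FOSat, gameB, posTurn,
      -not_and, not_and_or]
  | or φ ψ =>
    rw [unfold_of_edge_iff (fun i : Bool => (⟨cond i ψ φ, e, s, b⟩, m)) fun x =>
      ⟨by rintro ⟨⟩; exacts [⟨false, rfl⟩, ⟨true, rfl⟩], by rintro ⟨_ | _, rfl⟩ <;> constructor⟩]
    cases b <;> simp [ApproxHolds, approx_eq_approxCore, approxCore, FOSat, gameB, posTurn]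
  | ex x φ | all x φ =>
    rw [unfold_of_edge_iff (fun a : M.Dom => (⟨φ, e, Function.update s x a, b⟩, m)) fun x =>
      ⟨by rintro ⟨⟩; exact ⟨_, rfl⟩, by rintro ⟨_, rfl⟩; constructor⟩]
    cases b <;> simp [ApproxHolds, approx_eq_approxCore, approxCore, FOSat, gameB, posTurn]

end Approximants

section OmegaGame

variable {V : Vocab} (M : Struct.{u} V) (φ : SCLFormula V) (s : ℕ → M.Dom)

open GameArena

def OmegaWins : GOPos V M.Dom → Prop
  | .start => ∀ n', ∃ n ≥ n', ApproxHolds M (initPos φ s) n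
  | .mid n' => ∃ n ≥ n', ApproxHolds M (initPos φ s) n
  | .inner p m => ApproxHolds M p m

theorem omegaWins_iff_unfold (u : GOPos V M.Dom) :
    OmegaWins M φ s u ↔ (gameOmega M φ s).Unfold .eloise (OmegaWins M φ s) u := by
  cases u with
  | start =>
    rw [unfold_of_edge_iff GOPos.mid
      fun x => ⟨by rintro ⟨⟩; exact ⟨_, rfl⟩, by rintro ⟨n, rfl⟩; constructor⟩]
    rfl
  | mid n' =>
    rw [unfold_of_edge_iff (fun n : {n // n' ≤ n} => GOPos.inner (initPos φ s) n) fun x =>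
      ⟨by rintro ⟨⟩; exact ⟨⟨_, ‹_›⟩, rfl⟩, by rintro ⟨⟨n, hn⟩, rfl⟩; exact .eloisePick n' n hn⟩]
    simp [gameOmega, goTurn, OmegaWins]
  | inner p m =>
    refine (approxHolds_iff_unfold (p, m)).trans (unfold_comap (A := gameOmega M φ s)
      (B := gameB M) (W := OmegaWins M φ s) (q := (p, m)) (fun q => .inner q.1 q.2) rfl Iff.rfl
      fun x => ⟨?_, ?_⟩).symm
    · rintro ⟨⟩; exact ⟨_, ‹_›, rfl⟩
    · rintro ⟨⟨q, k⟩, h, rfl⟩; exact .play p q m k h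

theorem wellFounded_goStep : WellFounded fun x y => GOStep M φ s y x := by
  -- inside `G_n` a move shrinks the formula, except a jump to a reference formula, which ticks
  -- the clock
  let rank : GOPos V M.Dom → ℕ ×ₗ ℕ ×ₗ ℕ
    | .start => toLex (2, toLex (0, 0))
    | .mid _ => toLex (1, toLex (0, 0))
    | .inner p m => toLex (0, toLex (m, sizeOf p.form))
  refine Subrelation.wf (fun {x y} h => ?_) (InvImage.wf rank wellFounded_lt)
  show rank x < rank y
  rcases h with _ | _ | ⟨p, q, m, k, h⟩
  · simp [rank, Prod.Lex.lt_iff]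
  · simp [rank, Prod.Lex.lt_iff]
  · cases h <;> simp [rank, Prod.Lex.lt_iff] <;> omega

theorem bndTrue_iff_exists_approximant :
    BndTrue M s φ ↔ ∃ n, FOSat M s (approximant φ n) := by
  rw [BndTrue, hasWinningStrategy_iff (wellFounded_goStep M φ s) (omegaWins_iff_unfold M φ s)]
  have hinit : ∀ n, ApproxHolds M (initPos φ s) n ↔ FOSat M s (approximant φ n) := by
    simp [ApproxHolds, initPos, approximant]
  simp only [OmegaWins, hinit]
  exact ⟨fun h => (h 0).imp fun n hn => hn.2, fun ⟨n, hn⟩ n' =>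
    ⟨max n n', le_max_right _ _, (hinit _).mp (((hinit n).mpr hn).mono (le_max_left _ _))⟩⟩

end OmegaGame

section ApproximantSyntax

variable {V : Vocab}

theorem approxCore_isFO {k : (ℕ → Option (SCLFormula V)) → Bool → ℕ → SCLFormula V}
    (hk : ∀ e b L, (k e b L).IsFO) (ψ : SCLFormula V) : ∀ e b, (approxCore k e b ψ).IsFO := by
  induction ψ with
  | bot | eq | rel => exact fun _ _ => trivial
  | claim L => exact (hk · · L)
  | not φ ih => exact fun e b => ih e !b
  | and φ ψ ih₁ ih₂ | or φ ψ ih₁ ih₂ => exact fun e b => ⟨ih₁ e b, ih₂ e b⟩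
  | ex x φ ih | all x φ ih => exact ih
  | lab L φ ih => exact fun e => ih _

theorem approx_isFO (n : ℕ) (ψ : SCLFormula V) (e : ℕ → Option (SCLFormula V)) (b : Bool) :
    (approx n e b ψ).IsFO := by
  induction n generalizing ψ e b with
  | zero => exact approxCore_isFO (fun _ b _ => by cases b <;> trivial) ψ e b
  | succ n ih =>
    refine approx_eq_approxCore _ ▸ approxCore_isFO (fun e b L => ?_) ψ e b
    show SCLFormula.IsFO ((e L).elim _ _)
    cases e L with
    | none => cases b <;> trivial
    | some χ => exact ih χ e b

theorem approxCore_freeVars_subset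
    {k : (ℕ → Option (SCLFormula V)) → Bool → ℕ → SCLFormula V}
    (hk : ∀ e b L (U : Finset ℕ), (∀ L χ, e L = some χ → χ.freeVars ⊆ U) →
      (k e b L).freeVars ⊆ U)
    (ψ : SCLFormula V) : ∀ e b (U : Finset ℕ), (∀ L χ, e L = some χ → χ.freeVars ⊆ U) →
      ψ.freeVars ⊆ U → (approxCore k e b ψ).freeVars ⊆ U := by
  induction ψ with
  | bot | eq | rel => exact fun _ _ _ _ => id
  | claim L => exact fun e b U he _ => hk e b L U he
  | not φ ih => exact fun e b => ih e !b
  | and φ ψ ih₁ ih₂ | or φ ψ ih₁ ih₂ =>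
    exact fun e b U he hψ => Finset.union_subset (ih₁ e b U he (Finset.union_subset_left hψ))
      (ih₂ e b U he (Finset.union_subset_right hψ))
  | ex x φ ih | all x φ ih =>
    exact fun e b U he hψ => sdiff_le_iff'.mpr <| ih e b _
      (fun L χ hL => (he L χ hL).trans Finset.subset_union_left) (sdiff_le_iff'.mp hψ)
  | lab L φ ih =>
    refine fun e b U he hψ => ih _ b U (fun L' χ hL' => ?_) hψ
    rcases eq_or_ne L' L with rfl | hne
    · obtain rfl : SCLFormula.lab L' φ = χ := by simpa using hL'
      exact hψ
    · exact he L' χ (by rwa [Function.update_of_ne hne] at hL')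

theorem approx_freeVars_subset (n : ℕ) (ψ : SCLFormula V) (e : ℕ → Option (SCLFormula V))
    (b : Bool) (U : Finset ℕ) (he : ∀ L χ, e L = some χ → χ.freeVars ⊆ U)
    (hψ : ψ.freeVars ⊆ U) : (approx n e b ψ).freeVars ⊆ U := by
  induction n generalizing ψ e b U with
  | zero =>
    refine approxCore_freeVars_subset (fun _ b _ _ _ => ?_) ψ e b U he hψ
    cases b <;> simp [SCLFormula.freeVars]
  | succ n ih =>
    refine approx_eq_approxCore _ ▸
      approxCore_freeVars_subset (fun e b L U he => ?_) ψ e b U he hψ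
    show SCLFormula.freeVars ((e L).elim _ _) ⊆ U
    cases hL : e L with
    | none => cases b <;> simp [SCLFormula.freeVars]
    | some χ => exact ih χ e b U he (he L χ hL)

theorem freeVars_approximant {φ : SCLFormula V} (h : φ.freeVars = ∅) (n : ℕ) :
    (approximant φ n).freeVars = ∅ :=
  Finset.subset_empty.mp <|
    approx_freeVars_subset n φ _ true ∅ (fun _ _ h => by cases h) h.subset

end ApproximantSyntax

theorem bndTrue_of_foSat_iff {V : Vocab} {M : Struct.{u} V} {N : Struct.{v} V}
    (h : ∀ ψ : SCLFormula V, ψ.IsFO → ψ.freeVars = ∅ → ∀ s t, FOSat M s ψ ↔ FOSat N t ψ)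
    {φ : SCLFormula V} (hφ : φ.freeVars = ∅) (s : ℕ → M.Dom) (t : ℕ → N.Dom) :
    BndTrue M s φ → BndTrue N t φ := by
  simp only [bndTrue_iff_exists_approximant]
  exact fun ⟨n, hn⟩ =>
    ⟨n, (h _ (approx_isFO n φ _ true) (freeVars_approximant hφ n) s t).mp hn⟩

def SCLFormula.quantRank {V : Vocab} : SCLFormula V → ℕ
  | .not φ | .lab _ φ => φ.quantRank
  | .and φ ψ | .or φ ψ => max φ.quantRank ψ.quantRank
  | .ex _ φ | .all _ φ => φ.quantRank + 1
  | _ => 0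

theorem foSat_iff_of_backAndForth {V : Vocab} {M : Struct.{u} V} {N : Struct.{v} V}
    (R : ℕ → Finset ℕ → (ℕ → M.Dom) → (ℕ → N.Dom) → Prop)
    (hatom : ∀ k X s t, R k X s t → ∀ ψ : SCLFormula V, ψ.IsFOAtom → ψ.freeVars ⊆ X →
      (FOSat M s ψ ↔ FOSat N t ψ))
    (hforth : ∀ k X s t, R (k + 1) X s t → ∀ x a, ∃ b,
      R k (insert x X) (Function.update s x a) (Function.update t x b))
    (hback : ∀ k X s t, R (k + 1) X s t → ∀ x b, ∃ a,
      R k (insert x X) (Function.update s x a) (Function.update t x b))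
    {ψ : SCLFormula V} (hψ : ψ.IsFO) :
    ∀ k X s t, ψ.quantRank ≤ k → ψ.freeVars ⊆ X → R k X s t →
      (FOSat M s ψ ↔ FOSat N t ψ) := by
  induction ψ with
  | bot | eq | rel => exact fun k X s t _ hX hR => hatom k X s t hR _ (by trivial) hX
  | claim | lab => exact hψ.elim
  | not φ ih => exact fun k X s t hk hX hR => not_congr (ih hψ k X s t hk hX hR)
  | and φ ψ ih₁ ih₂ | or φ ψ ih₁ ih₂ =>
    intro k X s t hk hX hR
    simp only [SCLFormula.quantRank, max_le_iff] at hk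
    simp only [SCLFormula.freeVars, Finset.union_subset_iff] at hX
    simp only [FOSat]
    rw [ih₁ hψ.1 k X s t hk.1 hX.1 hR, ih₂ hψ.2 k X s t hk.2 hX.2 hR]
  | ex x φ ih =>
    rintro (_ | k) X s t hk hX hR
    · simp [SCLFormula.quantRank] at hk
    have ih' := fun s t => ih hψ k (insert x X) s t (by simpa [SCLFormula.quantRank] using hk)
      (Finset.subset_insert_iff.mpr (by rwa [← Finset.sdiff_singleton_eq_erase]))
    exact ⟨fun ⟨a, ha⟩ => (hforth _ _ _ _ hR x a).imp fun b hb => (ih' _ _ hb).mp ha,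
      fun ⟨b, hb⟩ => (hback _ _ _ _ hR x b).imp fun a ha => (ih' _ _ ha).mpr hb⟩
  | all x φ ih =>
    rintro (_ | k) X s t hk hX hR
    · simp [SCLFormula.quantRank] at hk
    have ih' := fun s t => ih hψ k (insert x X) s t (by simpa [SCLFormula.quantRank] using hk)
      (Finset.subset_insert_iff.mpr (by rwa [← Finset.sdiff_singleton_eq_erase]))
    exact ⟨fun h b => (hback _ _ _ _ hR x b).elim fun a ha => (ih' _ _ ha).mp (h a),
      fun h a => (hforth _ _ _ _ hR x a).elim fun b hb => (ih' _ _ hb).mpr (h b)⟩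

/-- A partition of `D` into copies of ℤ: `shift d a` is the point `d` steps from `a` along its
line. The height only serves to show that the action is free and that there are points far from
any finite set. -/
structure ZLines (D : Type*) where
  shift : ℤ → D → D
  shift_zero : ∀ a, shift 0 a = a
  shift_shift : ∀ d e a, shift d (shift e a) = shift (d + e) a
  height : D → ℤ
  height_shift : ∀ d a, height (shift d a) = height a + d

namespace ZLines

variable {D D₁ D₂ : Type*} (L : ZLines D)

theorem eq_shift_iff {a b : D} {d : ℤ} : a = L.shift d b ↔ b = L.shift (-d) a := by
  constructor <;> rintro rfl
  · rw [L.shift_shift, neg_add_cancel, L.shift_zero]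
  · rw [L.shift_shift, add_neg_cancel, L.shift_zero]

theorem shift_eq_shift_iff {a b : D} {d e : ℤ} :
    L.shift d a = L.shift e b ↔ a = L.shift (e - d) b := by
  rw [eq_comm, eq_shift_iff, L.shift_shift, neg_add_eq_sub]

theorem eq_shift_self_iff {a : D} {d : ℤ} : a = L.shift d a ↔ d = 0 := by
  refine ⟨fun h => ?_, fun h => by rw [h, L.shift_zero]⟩
  have := congrArg L.height h
  rw [L.height_shift] at this
  omega

theorem exists_forall_ne_shift [Nonempty D] (S : Finset D) (m : ℕ) :
    ∃ b, ∀ c ∈ S, ∀ d : ℤ, d.natAbs ≤ m → b ≠ L.shift d c := by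
  obtain a : D := Classical.arbitrary D
  refine ⟨L.shift (∑ c ∈ S, |L.height c| + m + 1 - L.height a) a, fun c hc d hd h => ?_⟩
  have hh := congrArg L.height h
  have hc : |L.height c| ≤ ∑ c ∈ S, |L.height c| :=
    Finset.single_le_sum (f := fun c => |L.height c|) (fun _ _ => abs_nonneg _) hc
  rw [L.height_shift, L.height_shift] at hh
  have := le_abs_self (L.height c)
  omega

def Similar (L₁ : ZLines D₁) (L₂ : ZLines D₂) (m : ℕ) (X : Finset ℕ) (s : ℕ → D₁)
    (t : ℕ → D₂) : Prop :=
  ∀ x ∈ X, ∀ y ∈ X, ∀ d : ℤ, d.natAbs ≤ m → (s x = L₁.shift d (s y) ↔ t x = L₂.shift d (t y))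

variable {L₁ : ZLines D₁} {L₂ : ZLines D₂} {m : ℕ} {X : Finset ℕ} {s : ℕ → D₁} {t : ℕ → D₂}

theorem Similar.symm (h : Similar L₁ L₂ m X s t) : Similar L₂ L₁ m X t s :=
  fun x hx y hy d hd => (h x hx y hy d hd).symm

theorem Similar.mono {m' : ℕ} (h : Similar L₁ L₂ m X s t) (hm : m' ≤ m) :
    Similar L₁ L₂ m' X s t :=
  fun x hx y hy d hd => h x hx y hy d (hd.trans hm)

theorem Similar.extend (h : Similar L₁ L₂ m X s t) {x : ℕ} {a : D₁} {b : D₂}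
    (hab : ∀ y ∈ X, ∀ d : ℤ, d.natAbs ≤ m → (a = L₁.shift d (s y) ↔ b = L₂.shift d (t y))) :
    Similar L₁ L₂ m (insert x X) (Function.update s x a) (Function.update t x b) := by
  intro y hy z hz d hd
  rcases eq_or_ne y x with rfl | hyx <;> rcases eq_or_ne z y with rfl | hzy
  · rw [Function.update_self, Function.update_self, L₁.eq_shift_self_iff, L₂.eq_shift_self_iff]
  · simp only [Function.update_self, Function.update_of_ne hzy]
    exact hab z ((Finset.mem_insert.mp hz).resolve_left hzy) d hd
  · rw [L₁.eq_shift_self_iff, L₂.eq_shift_self_iff]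
  · have hy' := (Finset.mem_insert.mp hy).resolve_left hyx
    rcases eq_or_ne z x with rfl | hzx
    · rw [Function.update_self, Function.update_self, Function.update_of_ne hyx,
        Function.update_of_ne hyx, L₁.eq_shift_iff, L₂.eq_shift_iff]
      exact hab y hy' (-d) (by simpa using hd)
    · simp only [Function.update_of_ne hyx, Function.update_of_ne hzx]
      exact h y hy' z ((Finset.mem_insert.mp hz).resolve_left hzx) d hd

/-- A new point within `2m` of some `s y₀` is answered at the same offset from `t y₀`, which
needs similarity up to `3m` to compare with the other points; any other new point is answered by
a point far from all of `t '' X`. -/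
theorem Similar.forth [Nonempty D₂] (h : Similar L₁ L₂ (3 * m) X s t) (x : ℕ) (a : D₁) :
    ∃ b, Similar L₁ L₂ m (insert x X) (Function.update s x a) (Function.update t x b) := by
  classical
  by_cases hnear : ∃ y₀ ∈ X, ∃ δ : ℤ, δ.natAbs ≤ 2 * m ∧ a = L₁.shift δ (s y₀)
  · obtain ⟨y₀, hy₀, δ, hδ, rfl⟩ := hnear
    refine ⟨L₂.shift δ (t y₀), (h.mono (by omega)).extend fun y hy d hd => ?_⟩
    rw [L₁.shift_eq_shift_iff, L₂.shift_eq_shift_iff]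
    exact h y₀ hy₀ y hy _ (by omega)
  · obtain ⟨b, hb⟩ := L₂.exists_forall_ne_shift (X.image t) m
    refine ⟨b, (h.mono (by omega)).extend fun y hy d hd => ?_⟩
    exact iff_of_false (fun ha => hnear ⟨y, hy, d, by omega, ha⟩)
      (hb _ (Finset.mem_image_of_mem t hy) d hd)

theorem Similar.back [Nonempty D₁] (h : Similar L₁ L₂ (3 * m) X s t) (x : ℕ) (b : D₂) :
    ∃ a, Similar L₁ L₂ m (insert x X) (Function.update s x a) (Function.update t x b) :=
  (h.symm.forth x b).imp fun _ ha => ha.symm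

def ulift : ZLines (ULift.{u} ℤ) where
  shift d a := ⟨a.down + d⟩
  shift_zero a := congrArg ULift.up (add_zero a.down)
  shift_shift d e a := congrArg ULift.up (by ring)
  height a := a.down
  height_shift _ _ := rfl

def uliftProd (ι : Type*) : ZLines (ULift.{u} ℤ × ι) where
  shift d a := (⟨a.1.down + d⟩, a.2)
  shift_zero a := Prod.ext (congrArg ULift.up (add_zero a.1.down)) rfl
  shift_shift d e a := Prod.ext (congrArg ULift.up (by ring)) rfl
  height a := a.1.down
  height_shift _ _ := rfl

end ZLines

theorem foSat_rel_iff_edge {M : Struct.{u} binVocab} (s : ℕ → M.Dom) (R : binVocab.Rel)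
    (args : Fin 2 → ℕ) : FOSat M s (.rel R args) ↔ Edge M (s (args 0)) (s (args 1)) := by
  have hargs : (fun i => s (args i)) =
      fun i : Fin 2 => if i.val = 0 then s (args 0) else s (args 1) := by
    funext i; fin_cases i <;> rfl
  rw [FOSat, hargs]
  rfl

theorem foSat_iff_of_zLines {M : Struct.{u} binVocab} {N : Struct.{v} binVocab}
    (L₁ : ZLines M.Dom) (L₂ : ZLines N.Dom)
    (h₁ : ∀ a b, Edge M a b ↔ b = L₁.shift 1 a ∨ a = L₁.shift 1 b)
    (h₂ : ∀ a b, Edge N a b ↔ b = L₂.shift 1 a ∨ a = L₂.shift 1 b)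
    {ψ : SCLFormula binVocab} (hψ : ψ.IsFO) (hsent : ψ.freeVars = ∅) (s : ℕ → M.Dom)
    (t : ℕ → N.Dom) : FOSat M s ψ ↔ FOSat N t ψ := by
  refine foSat_iff_of_backAndForth (fun k => ZLines.Similar L₁ L₂ (3 ^ k)) ?_
    (fun k X s t h => (pow_succ' 3 k ▸ h).forth) (fun k X s t h => (pow_succ' 3 k ▸ h).back)
    hψ _ ∅ s t le_rfl hsent.subset (by simp [ZLines.Similar])
  intro k X s t h ψ hatom hX
  have h1 : (1 : ℤ).natAbs ≤ 3 ^ k := Nat.one_le_pow _ _ (by norm_num)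
  cases ψ with
  | bot => exact Iff.rfl
  | eq x y =>
    have hxy := h x (hX (by simp [SCLFormula.freeVars])) y (hX (by simp [SCLFormula.freeVars])) 0
      (by simp)
    simpa only [FOSat, ZLines.shift_zero] using hxy
  | rel R args =>
    have hmem : ∀ i, args i ∈ X := fun i => hX (Finset.mem_image_of_mem args (Finset.mem_univ i))
    rw [foSat_rel_iff_edge, foSat_rel_iff_edge, h₁, h₂]
    exact or_congr (h _ (hmem 1) _ (hmem 0) 1 h1) (h _ (hmem 0) _ (hmem 1) 1 h1)
  | _ => exact hatom.elim

theorem edge_G1_iff (a b : ULift.{u} ℤ) :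
    Edge G1 a b ↔ b = ZLines.ulift.shift 1 a ∨ a = ZLines.ulift.shift 1 b := by
  show adjZ a.down b.down ↔ _
  simp only [adjZ, ZLines.ulift, ULift.ext_iff]

theorem edge_G2_iff (a b : ULift.{u} ℤ × Bool) :
    Edge G2 a b ↔
      b = (ZLines.uliftProd Bool).shift 1 a ∨ a = (ZLines.uliftProd Bool).shift 1 b := by
  show a.2 = b.2 ∧ adjZ a.1.down b.1.down ↔ _
  simp only [adjZ, ZLines.uliftProd, Prod.ext_iff, ULift.ext_iff]
  grind

theorem isGraph_G1 : IsGraph G1.{u} := fun _ _ h => Or.symm h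

theorem isGraph_G2 : IsGraph G2.{u} := fun _ _ h => ⟨h.1.symm, Or.symm h.2⟩

theorem graphConnected_G1 : GraphConnected G1.{u} := by
  rintro ⟨a⟩ ⟨c⟩ -
  refine ⟨(c - a).natAbs, fun i => ⟨if a ≤ c then a + i else a - i⟩, ?_, ?_, fun i _ => ?_⟩
  · show ULift.up _ = ULift.up a
    simp
  · show ULift.up _ = ULift.up c
    congr 1
    split_ifs <;> omega
  · show adjZ (if a ≤ c then a + i else a - i) (if a ≤ c then a + ↑(i + 1) else a - ↑(i + 1))
    unfold adjZ
    split_ifs <;> omega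

theorem not_graphConnected_G2 : ¬ GraphConnected G2.{u} := by
  intro h
  obtain ⟨n, f, h0, hn, hstep⟩ :=
    h (⟨0⟩, false) (⟨0⟩, true) fun h => Bool.false_ne_true (congrArg Prod.snd h)
  have hcomp : ∀ i ≤ n, (f i).2 = false := by
    intro i hi
    induction i with
    | zero => rw [h0]
    | succ i ih => exact (hstep i hi).1.symm.trans (ih (by omega))
  simpa [hn] using hcomp n le_rfl

/-- The class of (finite and infinite) connected graphs is
not definable in BndSCL.  Moreover `𝔊₁` and `𝔊₂` are elementarily
equivalent, `𝔊₁` is connected, `𝔊₂` is not, and every BndSCL sentence true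
in `𝔊₁` is true in `𝔊₂`. -/
theorem connectivity_not_definable_in_BndSCL :
    (¬ ∃ φ : SCLFormula binVocab, φ.freeVars = ∅ ∧
        ∀ M : Struct.{u} binVocab, IsGraph M →
          ((∀ s : ℕ → M.Dom, BndTrue M s φ) ↔ GraphConnected M)) ∧
    (∀ φ : SCLFormula binVocab, φ.IsFO → φ.freeVars = ∅ →
        ((∀ s : ℕ → (G1.{u}).Dom, FOSat G1.{u} s φ) ↔
          (∀ s : ℕ → (G2.{u}).Dom, FOSat G2.{u} s φ))) ∧
    GraphConnected G1.{u} ∧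
    ¬ GraphConnected G2.{u} ∧
    (∀ φ : SCLFormula binVocab, φ.freeVars = ∅ →
        (∀ s : ℕ → (G1.{u}).Dom, BndTrue G1.{u} s φ) →
        (∀ s : ℕ → (G2.{u}).Dom, BndTrue G2.{u} s φ)) := by
  have hFO : ∀ ψ : SCLFormula binVocab, ψ.IsFO → ψ.freeVars = ∅ →
      ∀ s t, FOSat G1.{u} s ψ ↔ FOSat G2.{u} t ψ :=
    fun ψ hψ hsent => foSat_iff_of_zLines _ _ edge_G1_iff edge_G2_iff hψ hsent
  have hBnd : ∀ φ : SCLFormula binVocab, φ.freeVars = ∅ →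
      (∀ s, BndTrue G1.{u} s φ) → ∀ t, BndTrue G2.{u} t φ :=
    fun φ hφ h t => bndTrue_of_foSat_iff hFO hφ _ t (h fun _ => ⟨0⟩)
  refine ⟨fun ⟨φ, hφ, hdef⟩ => ?_, fun ψ hψ hsent => ?_, graphConnected_G1,
    not_graphConnected_G2, hBnd⟩
  · exact not_graphConnected_G2 <|
      (hdef G2 isGraph_G2).mp (hBnd φ hφ ((hdef G1 isGraph_G1).mpr graphConnected_G1))
  · exact ⟨fun h t => (hFO ψ hψ hsent _ t).mp (h fun _ => ⟨0⟩),
      fun h s => (hFO ψ hψ hsent s _).mpr (h fun _ => (⟨0⟩, false))⟩
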